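/- For every integer e ≥ 1, the partition [3(2)^{2e-2}(1)^{4}] of 4e+3 is the smallest special orthogonal partition of 4e+3 dominating [2^{2e}1^{3}]; that is, [3(2)^{2e-2}(1)^{4}] is a special orthogonal partition, [2^{2e}1^{3}] ≤ [3(2)^{2e-2}(1)^{4}] in the dominance order, and every special orthogonal partition of 4e+3 that is ≥ [2^{2e}1^{3}] in the dominance order is ≥ [3(2)^{2e-2}(1)^{4}] in the dominance order. -/
import Mathlib


namespace JLFourier

/-- The partition whose parts (indexed from `0`) are the entries of the list `l`
(entries beyond the list, and zero entries, count as absent parts). -/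
def ofList (l : List ℕ) : ℕ → ℕ := fun i => l.getD i 0

/-- The transpose of a partition `p`: its `k`-th part (indexed from `0`) is the
number of parts of `p` that are at least `k + 1`. -/
noncomputable def transpose (p : ℕ → ℕ) : ℕ → ℕ := fun k => {i | k + 1 ≤ p i}.ncard

/-- `p` is a partition of `N`: a weakly decreasing, eventually zero function
`ℕ → ℕ` (listing the parts in decreasing order, indexed from `0`) with sum `N`. -/
def IsPartition (p : ℕ → ℕ) (N : ℕ) : Prop :=
  Antitone p ∧ ∃ n, (∀ i, n ≤ i → p i = 0) ∧ ∑ i ∈ Finset.range n, p i = N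

/-- The multiplicity of `d` as a part of `p`. -/
noncomputable def mult (p : ℕ → ℕ) (d : ℕ) : ℕ := {i | p i = d}.ncard

/-- A symplectic partition of `N`: every odd part occurs with even multiplicity. -/
def IsSymplectic (p : ℕ → ℕ) (N : ℕ) : Prop :=
  IsPartition p N ∧ ∀ d, Odd d → Even (mult p d)

/-- A special symplectic partition: a symplectic partition whose transpose is
also a symplectic partition. -/
def IsSpecialSymplectic (p : ℕ → ℕ) (N : ℕ) : Prop :=
  IsSymplectic p N ∧ IsSymplectic (transpose p) N

/-- An orthogonal partition of `N`: every (positive) even part occurs with even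
multiplicity. -/
def IsOrthogonal (p : ℕ → ℕ) (N : ℕ) : Prop :=
  IsPartition p N ∧ ∀ d, 0 < d → Even d → Even (mult p d)

/-- A special orthogonal partition: an orthogonal partition whose transpose is
also an orthogonal partition. -/
def IsSpecialOrthogonal (p : ℕ → ℕ) (N : ℕ) : Prop :=
  IsOrthogonal p N ∧ IsOrthogonal (transpose p) N

/-- Dominance order: `DomLE p q` means `p ≤ q`, i.e. for every `k` the sum of the
`k` largest parts of `p` is at most the sum of the `k` largest parts of `q`. -/
def DomLE (p q : ℕ → ℕ) : Prop :=
  ∀ k, ∑ i ∈ Finset.range k, p i ≤ ∑ i ∈ Finset.range k, q i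



def qf (e : ℕ) : ℕ → ℕ := fun i => if i = 0 then 3 else if i < 2*e-1 then 2 else if i < 2*e+3 then 1 else 0
def bf (e : ℕ) : ℕ → ℕ := fun i => if i < 2*e then 2 else if i < 2*e+3 then 1 else 0

lemma getD_list4 (m : ℕ) : ([1,1,1,1] : List ℕ).getD m 0 = if m < 4 then 1 else 0 := by
  split_ifs with hm
  · interval_cases m <;> rfl
  · exact List.getD_eq_default _ _ (by simp; omega)

lemma getD_list3 (m : ℕ) : ([1,1,1] : List ℕ).getD m 0 = if m < 3 then 1 else 0 := by
  split_ifs with hm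
  · interval_cases m <;> rfl
  · exact List.getD_eq_default _ _ (by simp; omega)

lemma ofList_q (e : ℕ) (he : 1 ≤ e) :
    ofList (3 :: (List.replicate (2 * e - 2) 2 ++ [1, 1, 1, 1])) = qf e := by
  funext i
  cases i with
  | zero => simp [ofList, qf]
  | succ j =>
    simp only [ofList, List.getD_cons_succ, qf]
    by_cases h : j < 2*e-2
    · rw [List.getD_append _ _ _ _ (by simpa using h)]
      simp only [List.getD_eq_getElem?_getD, List.getElem?_replicate, if_pos h, Option.getD_some]
      split_ifs <;> first | exact ‹False›.elim | omega
    · rw [List.getD_append_right _ _ _ _ (by simpa using h)]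
      simp only [List.length_replicate]
      rw [getD_list4]
      split_ifs <;> first | exact ‹False›.elim | omega

lemma ofList_b (e : ℕ) :
    ofList (List.replicate (2 * e) 2 ++ [1, 1, 1]) = bf e := by
  funext i
  simp only [ofList, bf]
  by_cases h : i < 2*e
  · rw [List.getD_append _ _ _ _ (by simpa using h)]
    simp only [List.getD_eq_getElem?_getD, List.getElem?_replicate, if_pos h, Option.getD_some]
  · rw [List.getD_append_right _ _ _ _ (by simpa using h)]
    simp only [List.length_replicate]
    rw [getD_list3]
    split_ifs <;> first | exact ‹False›.elim | omega

lemma sum_qf (e : ℕ) (he : 1 ≤ e) (k : ℕ) :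
    ∑ i ∈ Finset.range k, qf e i = min (2*k + min 1 k) (min (2*e+k) (4*e+3)) := by
  induction k with
  | zero => simp
  | succ k ih =>
    rw [Finset.sum_range_succ, ih, qf]
    split_ifs <;> first | exact ‹False›.elim | omega

lemma sum_bf (e : ℕ) (k : ℕ) :
    ∑ i ∈ Finset.range k, bf e i = min (2*k) (min (2*e+k) (4*e+3)) := by
  induction k with
  | zero => simp
  | succ k ih =>
    rw [Finset.sum_range_succ, ih, bf]
    split_ifs <;> first | exact ‹False›.elim | omega


lemma ncard_setOf_eq (P : ℕ → Prop) (s : Finset ℕ) (h : ∀ i, P i ↔ i ∈ s) :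
    {i | P i}.ncard = s.card := by
  have he : {i | P i} = ↑s := Set.ext (by simpa using h)
  rw [he, Set.ncard_coe_finset]

lemma finite_ge (c : ℕ → ℕ) (n : ℕ) (hn0 : ∀ i, n ≤ i → c i = 0) (a : ℕ) (ha : 1 ≤ a) :
    {i | a ≤ c i}.Finite := by
  apply (Set.finite_Iio n).subset
  intro i hi
  simp only [Set.mem_setOf_eq] at hi
  by_contra h
  simp only [Set.mem_Iio, not_lt] at h
  rw [hn0 i h] at hi; omega

lemma transpose_antitone (p : ℕ → ℕ) (n : ℕ) (hn0 : ∀ i, n ≤ i → p i = 0) :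
    Antitone (transpose p) := by
  apply antitone_nat_of_succ_le
  intro k
  apply Set.ncard_le_ncard
  · intro i hi; simp only [Set.mem_setOf_eq] at hi ⊢; omega
  · exact finite_ge p n hn0 (k+1) (by omega)

lemma transpose_qf0 (e : ℕ) (he : 1 ≤ e) : transpose (qf e) 0 = 2*e+3 := by
  rw [transpose]
  rw [ncard_setOf_eq _ (Finset.range (2*e+3))
    (by intro i; simp only [Finset.mem_range, qf]; split_ifs <;> (try simp) <;> omega), Finset.card_range]

lemma transpose_qf1 (e : ℕ) (he : 1 ≤ e) : transpose (qf e) 1 = 2*e-1 := by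
  rw [transpose]
  rw [ncard_setOf_eq _ (Finset.range (2*e-1))
    (by intro i; simp only [Finset.mem_range, qf]; split_ifs <;> (try simp) <;> omega), Finset.card_range]

lemma transpose_qf2 (e : ℕ) (he : 1 ≤ e) : transpose (qf e) 2 = 1 := by
  rw [transpose]
  rw [ncard_setOf_eq _ {0}
    (by intro i; simp only [Finset.mem_singleton, qf]; split_ifs <;> (try simp) <;> omega), Finset.card_singleton]

lemma transpose_qfk (e : ℕ) (k : ℕ) (hk : 3 ≤ k) : transpose (qf e) k = 0 := by
  rw [transpose]
  rw [ncard_setOf_eq _ ∅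
    (by intro i; simp only [Finset.notMem_empty, iff_false, qf]; split_ifs <;> (try simp) <;> omega)]
  simp

lemma qf_zero (e : ℕ) (i : ℕ) (hi : 2*e+3 ≤ i) : qf e i = 0 := by
  simp only [qf]; split_ifs <;> (try simp) <;> omega

lemma part1 (e : ℕ) (he : 1 ≤ e) : IsSpecialOrthogonal (qf e) (4*e+3) := by
  constructor
  · constructor
    · constructor
      · apply antitone_nat_of_succ_le
        intro i
        simp only [qf]
        split_ifs <;> first | exact ‹False›.elim | omega
      · exact ⟨2*e+3, qf_zero e, by rw [sum_qf e he]; omega⟩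
    · intro d hd hde
      by_cases hd2 : d = 2
      · subst hd2
        rw [mult, ncard_setOf_eq _ (Finset.Ico 1 (2*e-1))
          (by intro i; simp only [Finset.mem_Ico, qf]; split_ifs <;> (try simp) <;> omega), Nat.card_Ico]
        exact ⟨e-1, by omega⟩
      · rw [mult, ncard_setOf_eq _ ∅ (by
          intro i
          simp only [Finset.notMem_empty, iff_false, qf]
          rw [Nat.even_iff] at hde
          split_ifs <;> (try simp) <;> omega)]
        simp
  · constructor
    · constructor
      · exact transpose_antitone _ (2*e+3) (qf_zero e)
      · refine ⟨3, fun i hi => transpose_qfk e i hi, ?_⟩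
        rw [Finset.sum_range_succ, Finset.sum_range_succ, Finset.sum_range_one,
          transpose_qf0 e he, transpose_qf1 e he, transpose_qf2 e he]
        omega
    · intro d hd hde
      rw [Nat.even_iff] at hde
      rw [mult, ncard_setOf_eq _ ∅ (by
        intro k
        simp only [Finset.notMem_empty, iff_false]
        rcases k with _|_|_|k
        · rw [transpose_qf0 e he]; omega
        · rw [transpose_qf1 e he]; omega
        · rw [transpose_qf2 e he]; omega
        · rw [transpose_qfk e _ (by omega)]; omega)]
      simp

lemma no2 (e : ℕ) (he : 1 ≤ e) (c : ℕ → ℕ) (hc : IsSpecialOrthogonal c (4*e+3))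
    (h2 : c 0 = 2) : False := by
  obtain ⟨⟨⟨hanti, n, hn0, hsum⟩, hcev⟩, _, htev⟩ := hc
  have hle2 : ∀ i, c i ≤ 2 := fun i => by
    have := hanti (Nat.zero_le i); omega
  have h1 : ∃ i, c i = 1 := by
    by_contra h1
    push_neg at h1
    have hev : Even (4*e+3) := by
      rw [← hsum]
      apply Finset.even_sum
      intro i _
      have h := hle2 i
      have h' := h1 i
      have : c i = 0 ∨ c i = 2 := by omega
      rcases this with h'' | h'' <;> simp [h'']
    rw [Nat.even_iff] at hev; omega
  obtain ⟨i0, hi0⟩ := h1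
  have hfin1 : {i | 0 + 1 ≤ c i}.Finite := finite_ge c n hn0 _ (by omega)
  have hfin2 : {i | c i = 2}.Finite := hfin1.subset (fun i hi => by
    simp only [Set.mem_setOf_eq] at hi ⊢; omega)
  have hmev : Even (mult c 2) := hcev 2 (by omega) (by decide)
  have hm1 : 1 ≤ mult c 2 := by
    rw [mult]
    exact (Set.ncard_pos hfin2).mpr ⟨0, h2⟩
  have hm2 : 2 ≤ mult c 2 := by
    obtain ⟨r, hr⟩ := hmev; omega
  have ht1 : transpose c 1 = mult c 2 := by
    rw [transpose, mult]
    congr 1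
    ext i
    simp only [Set.mem_setOf_eq]
    have := hle2 i
    omega
  have ht0 : mult c 2 < transpose c 0 := by
    rw [transpose, mult]
    apply Set.ncard_lt_ncard _ hfin1
    constructor
    · intro i hi; simp only [Set.mem_setOf_eq] at hi ⊢; omega
    · intro hsub
      have h' := hsub (show i0 ∈ {i | 0 + 1 ≤ c i} from by
        simp only [Set.mem_setOf_eq]; omega)
      simp only [Set.mem_setOf_eq] at h'
      omega
  have htk : ∀ k, 2 ≤ k → transpose c k = 0 := by
    intro k hk
    rw [transpose]
    have hempty : {i | k + 1 ≤ c i} = ∅ := by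
      ext i; simp only [Set.mem_setOf_eq, Set.mem_empty_iff_false, iff_false]
      have := hle2 i; omega
    rw [hempty]; simp
  have hmt : mult (transpose c) (mult c 2) = 1 := by
    rw [mult]
    have hset : {k | transpose c k = mult c 2} = {1} := by
      ext k
      simp only [Set.mem_setOf_eq, Set.mem_singleton_iff]
      constructor
      · intro hkm
        rcases k with _|_|k
        · omega
        · rfl
        · rw [htk (k+2) (by omega)] at hkm; omega
      · rintro rfl; exact ht1
    rw [hset, Set.ncard_singleton]
  have := htev (mult c 2) (by omega) hmev
  rw [hmt, Nat.even_iff] at this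
  omega

lemma part3 (e : ℕ) (he : 1 ≤ e) (c : ℕ → ℕ) (hc : IsSpecialOrthogonal c (4*e+3))
    (hbc : ∀ k, min (2*k) (min (2*e+k) (4*e+3)) ≤ ∑ i ∈ Finset.range k, c i) :
    ∀ k, min (2*k + min 1 k) (min (2*e+k) (4*e+3)) ≤ ∑ i ∈ Finset.range k, c i := by
  intro k
  by_cases hk : 1 ≤ k ∧ k ≤ 2*e-1
  · have hs := hbc k
    -- need: sum ≥ 2k+1
    have hgoal : 2*k+1 ≤ ∑ i ∈ Finset.range k, c i → min (2*k + min 1 k) (min (2*e+k) (4*e+3)) ≤ ∑ i ∈ Finset.range k, c i := by omega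
    apply hgoal
    by_contra hlt
    push_neg at hlt
    have hsumk : ∑ i ∈ Finset.range k, c i = 2*k := by omega
    have hanti : Antitone c := hc.1.1.1
    have hc0 : 2 ≤ c 0 := by
      have := hbc 1
      rw [Finset.sum_range_one] at this
      omega
    have hck : 2 ≤ c k := by
      have h1 := hbc (k+1)
      rw [Finset.sum_range_succ, hsumk] at h1
      omega
    have hc02 : c 0 = 2 ∨ 3 ≤ c 0 := by omega
    rcases hc02 with hc02 | hc02
    · exact absurd (no2 e he c hc hc02) (fun h => h)
    · obtain ⟨j, rfl⟩ : ∃ j, k = j + 1 := ⟨k-1, by omega⟩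
      rw [Finset.sum_range_succ'] at hsumk
      have hb : ∀ i ∈ Finset.range j, 2 ≤ c (i+1) := by
        intro i hi
        simp only [Finset.mem_range] at hi
        exact le_trans hck (hanti (by omega))
      have hge : ∑ i ∈ Finset.range j, 2 ≤ ∑ i ∈ Finset.range j, c (i+1) :=
        Finset.sum_le_sum hb
      rw [Finset.sum_const, Finset.card_range, smul_eq_mul] at hge
      omega
  · have := hbc k
    omega

theorem stmt18 (e : ℕ) (he : 1 ≤ e) :
    IsSpecialOrthogonal (ofList (3 :: (List.replicate (2 * e - 2) 2 ++ [1, 1, 1, 1]))) (4 * e + 3) ∧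
    DomLE (ofList (List.replicate (2 * e) 2 ++ [1, 1, 1])) (ofList (3 :: (List.replicate (2 * e - 2) 2 ++ [1, 1, 1, 1]))) ∧
    ∀ c : ℕ → ℕ, IsSpecialOrthogonal c (4 * e + 3) →
      DomLE (ofList (List.replicate (2 * e) 2 ++ [1, 1, 1])) c →
      DomLE (ofList (3 :: (List.replicate (2 * e - 2) 2 ++ [1, 1, 1, 1]))) c := by
  rw [ofList_q e he, ofList_b e]
  refine ⟨part1 e he, ?_, ?_⟩
  · intro k
    rw [sum_qf e he, sum_bf e]
    omega
  · intro c hc hbc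
    intro k
    rw [sum_qf e he]
    apply part3 e he c hc
    intro k'
    have := hbc k'
    rw [sum_bf e] at this
    exact this

end JLFourier
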